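/- arXiv:1311.5832 — 2 statements merged into one kernel-verified Lean document; each statement's English description precedes it below -/
import Mathlib

section
/- Let d ≥ 3 and let u ∈ [0,1]^d with u_1 ≤ ⋯ ≤ u_d. Let π ∈ S_d be a permutation having exactly three non-fixed points i_1 < i_2 < i_3 in {1,…,d}. Then for any d-copula C, |C(u) − C(u_π)| ≤ u_{i_3} − u_{i_1} ≤ u_d − u_1. -/
/-!
A copula is nondecreasing and 1-Lipschitz in each coordinate; the Lipschitz bound follows from
the 2-increasing property, which lets the remaining coordinates be raised to `1`, where the
margins are uniform. Hence for `v ≤ w` we get `0 ≤ C w - C v ≤ ∑ (w i - v i)`, and comparing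
`u` and `u ∘ π` with their supremum `M` bounds `|C u - C (u ∘ π)|` by `∑ (M i - u i)`, the
total upward displacement `∑ (u (π i) - u i)⁺`. For a 3-cycle on ordered values this is
`u i₃ - u i₁` in both cyclic orientations.
-/

/-- A `d`-copula: a function `C : [0,1]^d → ℝ` (defined on all of `(Fin d → ℝ)`,
with the copula conditions imposed on `[0,1]^d`) that is grounded, has uniform
one-dimensional margins, and is `d`-increasing. -/
def IsCopula (d : ℕ) (C : (Fin d → ℝ) → ℝ) : Prop :=
  (∀ u : Fin d → ℝ, (∀ i, u i ∈ Set.Icc (0:ℝ) 1) → (∃ i, u i = 0) → C u = 0) ∧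
  (∀ u : Fin d → ℝ, (∀ i, u i ∈ Set.Icc (0:ℝ) 1) →
    ∀ i : Fin d, (∀ j, j ≠ i → u j = 1) → C u = u i) ∧
  (∀ a b : Fin d → ℝ, (∀ i, a i ∈ Set.Icc (0:ℝ) 1) → (∀ i, b i ∈ Set.Icc (0:ℝ) 1) →
    (∀ i, a i ≤ b i) →
    0 ≤ ∑ S : Finset (Fin d),
        (-1 : ℝ) ^ (d - S.card) * C (fun k => if k ∈ S then b k else a k))

section UnitCube

variable {ι : Type*} [DecidableEq ι]

lemma forall_piecewise_mem_Icc {a b : ι → ℝ} (ha : ∀ i, a i ∈ Set.Icc (0:ℝ) 1)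
    (hb : ∀ i, b i ∈ Set.Icc (0:ℝ) 1) (s : Finset ι) :
    ∀ i, s.piecewise a b i ∈ Set.Icc (0:ℝ) 1 := by
  intro i
  by_cases hi : i ∈ s <;> simp [hi, ha i, hb i]

lemma forall_update_mem_Icc {v : ι → ℝ} (hv : ∀ i, v i ∈ Set.Icc (0:ℝ) 1) (i : ι) {x : ℝ}
    (hx : x ∈ Set.Icc (0:ℝ) 1) : ∀ k, Function.update v i x k ∈ Set.Icc (0:ℝ) 1 := by
  intro k
  rcases eq_or_ne k i with rfl | hk
  · simpa using hx
  · simpa [hk] using hv k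

end UnitCube

namespace IsCopula

open Function

variable {d : ℕ} {C : (Fin d → ℝ) → ℝ}

lemma sum_powerset_piecewise_nonneg (hC : IsCopula d C) {a b : Fin d → ℝ}
    (ha : ∀ i, a i ∈ Set.Icc (0:ℝ) 1) (hb : ∀ i, b i ∈ Set.Icc (0:ℝ) 1) (hab : ∀ i, a i ≤ b i)
    (E : Finset (Fin d)) (hE : ∀ k ∉ E, a k = 0) :
    0 ≤ ∑ U ∈ E.powerset, (-1 : ℝ) ^ U.card * C (U.piecewise a b) := by
  -- reindex the vertices by the set `U = Sᶜ` of coordinates taken from `a`; a vertex taking some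
  -- coordinate outside `E` from `a` has a zero coordinate, so `C` vanishes there
  have hvol := hC.2.2 a b ha hb hab
  rw [Fintype.sum_bijective compl compl_involutive.bijective _
    (fun U => (-1 : ℝ) ^ U.card * C (U.piecewise a b))
    (fun S => by rw [Finset.card_compl, Fintype.card_fin, Finset.piecewise_compl]; rfl)] at hvol
  rwa [Finset.sum_subset (Finset.subset_univ E.powerset)]
  intro U _ hU
  obtain ⟨k, hkU, hkE⟩ := Finset.not_subset.1 (Finset.mem_powerset.not.1 hU)
  rw [hC.1 _ (forall_piecewise_mem_Icc ha hb U) ⟨k, by simp [hkU, hE k hkE]⟩, mul_zero]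

lemma update_le_update (hC : IsCopula d C) {v : Fin d → ℝ} (hv : ∀ i, v i ∈ Set.Icc (0:ℝ) 1)
    (i : Fin d) {x y : ℝ} (hx : 0 ≤ x) (hxy : x ≤ y) (hy : y ≤ 1) :
    C (update v i x) ≤ C (update v i y) := by
  have hvol := hC.sum_powerset_piecewise_nonneg (a := update 0 i x)
    (b := update v i y) (forall_update_mem_Icc (fun _ => by simp) i ⟨hx, hxy.trans hy⟩)
    (forall_update_mem_Icc hv i ⟨hx.trans hxy, hy⟩)
    (fun k => by rcases eq_or_ne k i with rfl | hk <;> simp [*, (hv k).1]) (insert i ∅)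
    (fun k hk => by simp_all)
  simp only [Finset.sum_powerset_insert (Finset.notMem_empty _), Finset.powerset_empty,
    Finset.sum_singleton, Finset.piecewise_insert, Finset.piecewise_empty] at hvol
  simp only [Finset.card_empty, LawfulSingleton.insert_empty_eq, Finset.card_singleton, pow_zero,
    pow_one, one_mul, neg_mul, Function.update_self, Function.update_idem] at hvol
  linarith

lemma update_sub_update_mono (hC : IsCopula d C) {v : Fin d → ℝ}
    (hv : ∀ i, v i ∈ Set.Icc (0:ℝ) 1) {i j : Fin d} (hij : i ≠ j) {x y X Y : ℝ} (hx : 0 ≤ x) (hxy : x ≤ y) (hy : y ≤ 1)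
    (hX : 0 ≤ X) (hXY : X ≤ Y) (hY : Y ≤ 1) :
    C (update (update v j X) i y) - C (update (update v j X) i x) ≤
      C (update (update v j Y) i y) - C (update (update v j Y) i x) := by
  have hvol := hC.sum_powerset_piecewise_nonneg (a := update (update 0 j X) i x)
    (b := update (update v j Y) i y)
    (forall_update_mem_Icc (forall_update_mem_Icc (fun _ => by simp) j ⟨hX, hXY.trans hY⟩) i
      ⟨hx, hxy.trans hy⟩)
    (forall_update_mem_Icc (forall_update_mem_Icc hv j ⟨hX.trans hXY, hY⟩) i ⟨hx.trans hxy, hy⟩)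
    (fun k => by
      rcases eq_or_ne k i with rfl | hki
      · simpa
      rcases eq_or_ne k j with rfl | hkj <;> simp [*, (hv k).1])
    (insert i (insert j ∅)) (fun k hk => by simp_all)
  simp only [Finset.sum_powerset_insert (Finset.notMem_empty _),
    Finset.sum_powerset_insert (show i ∉ insert j ∅ by simpa using hij), Finset.powerset_empty,
    Finset.sum_singleton, Finset.piecewise_insert, Finset.piecewise_empty] at hvol
  simp only [Finset.card_empty, LawfulSingleton.insert_empty_eq, Finset.card_singleton,
    Finset.card_pair hij, pow_zero, pow_one, neg_one_sq, one_mul, neg_mul, Function.update_self,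
    Function.update_of_ne hij.symm, Function.update_comm hij, Function.update_idem] at hvol
  linarith

lemma update_sub_update_le (hC : IsCopula d C) {v : Fin d → ℝ}
    (hv : ∀ i, v i ∈ Set.Icc (0:ℝ) 1) (i : Fin d) {x y : ℝ} (hx : 0 ≤ x) (hxy : x ≤ y)
    (hy : y ≤ 1) :
    C (update v i y) - C (update v i x) ≤ y - x := by
  have raise : ∀ s : Finset (Fin d),
      C (update v i y) - C (update v i x) ≤
        C (update (s.piecewise 1 v) i y) - C (update (s.piecewise 1 v) i x) := by
    intro s
    induction s using Finset.induction_on with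
    | empty => simp
    | @insert j s _ ih =>
      set w := s.piecewise 1 v
      have hw : ∀ k, w k ∈ Set.Icc (0:ℝ) 1 := forall_piecewise_mem_Icc (fun _ => by simp) hv s
      rw [Finset.piecewise_insert]
      rcases eq_or_ne i j with rfl | hij
      · simpa only [Function.update_idem] using ih
      · have := hC.update_sub_update_mono hw hij hx hxy hy (hw j).1 (hw j).2 le_rfl
        rw [Function.update_eq_self] at this
        simpa only [Pi.one_apply] using ih.trans this
  have margin : ∀ z, z ∈ Set.Icc (0:ℝ) 1 → C (update 1 i z) = z := fun z hz => by
    simpa using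
      hC.2.1 _ (forall_update_mem_Icc (fun _ => by simp) i hz) i (fun k hk => by simp [hk])
  simpa [margin x ⟨hx, hxy.trans hy⟩, margin y ⟨hx.trans hxy, hy⟩] using raise Finset.univ

lemma sub_mem_Icc_of_le (hC : IsCopula d C) {v w : Fin d → ℝ}
    (hv : ∀ i, v i ∈ Set.Icc (0:ℝ) 1) (hw : ∀ i, w i ∈ Set.Icc (0:ℝ) 1) (hvw : ∀ i, v i ≤ w i) :
    C w - C v ∈ Set.Icc 0 (∑ i, (w i - v i)) := by
  have path : ∀ s : Finset (Fin d),
      C (s.piecewise w v) - C v ∈ Set.Icc 0 (∑ i ∈ s, (w i - v i)) := by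
    intro s
    induction s using Finset.induction_on with
    | empty => simp
    | @insert j s hj ih =>
      set z := s.piecewise w v
      have hz : ∀ k, z k ∈ Set.Icc (0:ℝ) 1 := forall_piecewise_mem_Icc hw hv s
      have hzj : update z j (v j) = z := by
        rw [Function.update_eq_self_iff]
        exact (Finset.piecewise_eq_of_notMem _ _ _ hj).symm
      have hle := hC.update_le_update hz j (hv j).1 (hvw j) (hw j).2
      have hlip := hC.update_sub_update_le hz j (hv j).1 (hvw j) (hw j).2
      rw [hzj] at hle hlip
      rw [Finset.piecewise_insert, Finset.sum_insert hj]
      exact ⟨by linarith [ih.1], by linarith [ih.2]⟩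
  simpa using path Finset.univ

lemma abs_sub_comp_perm_le (hC : IsCopula d C) {u : Fin d → ℝ}
    (hu : ∀ i, u i ∈ Set.Icc (0:ℝ) 1) (σ : Equiv.Perm (Fin d)) :
    |C u - C (u ∘ σ)| ≤ ∑ i, (u (σ i) - u i)⁺ := by
  set M := u ⊔ (u ∘ σ)
  have hM : ∀ i, M i ∈ Set.Icc (0:ℝ) 1 :=
    fun i => ⟨(hu i).1.trans le_sup_left, sup_le (hu i).2 (hu (σ i)).2⟩
  have huM := hC.sub_mem_Icc_of_le hu hM (fun i => le_sup_left)
  have huσM := hC.sub_mem_Icc_of_le (v := u ∘ σ) (fun i => hu (σ i)) hM (fun i => le_sup_right)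
  have hsumM : ∑ i, (M i - u i) = ∑ i, (u (σ i) - u i)⁺ := by
    refine Finset.sum_congr rfl fun i _ => ?_
    show max (u i) (u (σ i)) - u i = _
    rw [← max_sub_sub_right, sub_self, posPart_def, max_comm]
  have hsumσ : ∑ i, (M i - (u ∘ σ) i) = ∑ i, (M i - u i) := by
    simp only [Finset.sum_sub_distrib, Function.comp_apply, Equiv.sum_comp σ u]
  rw [abs_sub_le_iff]
  constructor <;> linarith [huM.1, huM.2, huσM.1, huσM.2]

end IsCopula

lemma Equiv.Perm.three_cycle_cases {α : Type*} {π : Equiv.Perm α} {a b c : α}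
    (hab : a ≠ b) (hbc : b ≠ c) (hac : a ≠ c) (hπ : ∀ i, π i ≠ i ↔ i = a ∨ i = b ∨ i = c) :
    (π a = b ∧ π b = c ∧ π c = a) ∨ (π a = c ∧ π b = a ∧ π c = b) := by
  have moved : ∀ i, i = a ∨ i = b ∨ i = c → π i ≠ i := fun i h => (hπ i).2 h
  have image : ∀ i, i = a ∨ i = b ∨ i = c → π i = a ∨ π i = b ∨ π i = c :=
    fun i h => (hπ (π i)).1 fun h' => moved i h (π.injective h')
  grind [π.injective.eq_iff]

lemma sum_posPart_sub_eq_of_three_cycle {ι : Type*} [Fintype ι] [DecidableEq ι] {π : Equiv.Perm ι}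
    {a b c : ι} (hab : a ≠ b) (hbc : b ≠ c) (hac : a ≠ c)
    (hπ : ∀ i, π i ≠ i ↔ i = a ∨ i = b ∨ i = c) {u : ι → ℝ} (hua : u a ≤ u b) (hub : u b ≤ u c) :
    ∑ i, (u (π i) - u i)⁺ = u c - u a := by
  rw [← Finset.sum_subset (Finset.subset_univ {a, b, c}) fun i _ hi => ?_]
  · rw [Finset.sum_insert (by simp [hab, hac]), Finset.sum_pair hbc]
    rcases Equiv.Perm.three_cycle_cases hab hbc hac hπ with ⟨ha, hb, hc⟩ | ⟨ha, hb, hc⟩ <;>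
      simp only [ha, hb, hc, posPart_eq_self.2, posPart_eq_zero.2, sub_nonneg, sub_nonpos, hua,
        hub, hua.trans hub] <;> ring
  · have hi : π i = i := by
      by_contra h
      exact hi (by simpa using (hπ i).1 h)
    rw [hi, sub_self, posPart_zero]

/-- If the permutation `π` has exactly three non-fixed points `i₁ < i₂ < i₃` and `u` is
ordered, then `|C(u) − C(u_π)| ≤ u_{i₃} − u_{i₁} ≤ u_d − u_1`. -/
theorem three_cycle_bound (d : ℕ) (hd : 3 ≤ d)
    (u : Fin d → ℝ) (hu : ∀ i, u i ∈ Set.Icc (0:ℝ) 1)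
    (hmono : ∀ i j : Fin d, i ≤ j → u i ≤ u j)
    (π : Equiv.Perm (Fin d))
    (i₁ i₂ i₃ : Fin d) (h12 : i₁ < i₂) (h23 : i₂ < i₃)
    (hfix : ∀ i : Fin d, π i ≠ i ↔ (i = i₁ ∨ i = i₂ ∨ i = i₃))
    (C : (Fin d → ℝ) → ℝ) (hC : IsCopula d C) :
    |C u - C (u ∘ π)| ≤ u i₃ - u i₁ ∧
    u i₃ - u i₁ ≤ u ⟨d - 1, by omega⟩ - u ⟨0, by omega⟩ := by
  have hdisp := sum_posPart_sub_eq_of_three_cycle h12.ne h23.ne (h12.trans h23).ne hfix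
    (hmono _ _ h12.le) (hmono _ _ h23.le)
  refine ⟨hdisp ▸ hC.abs_sub_comp_perm_le hu π, sub_le_sub (hmono _ _ ?_) (hmono _ _ ?_)⟩
  · exact Fin.le_def.2 (Nat.le_sub_one_of_lt i₃.isLt)
  · exact Fin.le_def.2 (Nat.zero_le _)
end

section
/- For d = 2, the function C(u_1, u_2) := min{ u_1, u_2, (u_1 − 1/3)^+ + (u_2 − 2/3)^+ } is a 2-copula, and it satisfies |C(1/3, 2/3) − C(2/3, 1/3)| = 1/3, so the bound |C(u) − C(u_τ)| ≤ 1/3 for 2-copulas (where τ interchanges the two arguments) is attained. -/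
/-!
On the unit square `C(u, v) = min(u, (v - 2/3)⁺) + min((u - 1/3)⁺, v)`. Each summand is the
minimum of a nondecreasing function of `u` and a nondecreasing function of `v`, and such a
function is 2-increasing because `min` is supermodular; the boundary values and the value
`C(1/3, 2/3) - C(2/3, 1/3) = 1/3 - 0` are direct computations.
-/

/-- A 2-copula: `C(u,0) = C(0,u) = 0`, `C(u,1) = C(1,u) = u` for `u ∈ [0,1]`, and `C`
is 2-increasing on `[0,1]²`. -/
def Is2Copula (C : ℝ → ℝ → ℝ) : Prop :=
  (∀ u ∈ Set.Icc (0:ℝ) 1, C u 0 = 0 ∧ C 0 u = 0 ∧ C u 1 = u ∧ C 1 u = u) ∧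
  (∀ a₁ b₁ a₂ b₂ : ℝ, a₁ ∈ Set.Icc (0:ℝ) 1 → b₁ ∈ Set.Icc (0:ℝ) 1 →
    a₂ ∈ Set.Icc (0:ℝ) 1 → b₂ ∈ Set.Icc (0:ℝ) 1 → a₁ ≤ b₁ → a₂ ≤ b₂ →
    0 ≤ C b₁ b₂ - C a₁ b₂ - C b₁ a₂ + C a₁ a₂)

section LinearOrderedAddCommGroup

variable {α : Type*} [AddCommGroup α] [LinearOrder α] [IsOrderedAddMonoid α]

lemma min_sub_min_sub_min_add_min_nonneg {x x' y y' : α} (hx : x ≤ x') (hy : y ≤ y') :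
    0 ≤ min x' y' - min x y' - min x' y + min x y := by
  grind

lemma monotone_max_sub_zero (c : α) : Monotone fun x : α => max (x - c) 0 :=
  fun _ _ h => max_le_max_right 0 (sub_le_sub_right h c)

end LinearOrderedAddCommGroup

noncomputable def nelsenCopula (u v : ℝ) : ℝ :=
  min u (min v (max (u - 1/3) 0 + max (v - 2/3) 0))

lemma nelsenCopula_eq_add {u v : ℝ} (hu : u ∈ Set.Icc (0 : ℝ) 1) (hv : v ∈ Set.Icc (0 : ℝ) 1) :
    nelsenCopula u v = min u (max (v - 2/3) 0) + min (max (u - 1/3) 0) v := by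
  obtain ⟨hu0, hu1⟩ := hu
  obtain ⟨hv0, hv1⟩ := hv
  simp only [nelsenCopula, min_def, max_def]; split_ifs <;> linarith

lemma nelsenCopula_boundary {u : ℝ} (hu : u ∈ Set.Icc (0 : ℝ) 1) :
    nelsenCopula u 0 = 0 ∧ nelsenCopula 0 u = 0 ∧ nelsenCopula u 1 = u ∧ nelsenCopula 1 u = u := by
  obtain ⟨hu0, hu1⟩ := hu
  refine ⟨?_, ?_, ?_, ?_⟩ <;> · simp only [nelsenCopula, min_def, max_def]; split_ifs <;> linarith

lemma nelsenCopula_two_increasing {a₁ b₁ a₂ b₂ : ℝ} (ha₁ : a₁ ∈ Set.Icc (0 : ℝ) 1)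
    (hb₁ : b₁ ∈ Set.Icc (0 : ℝ) 1) (ha₂ : a₂ ∈ Set.Icc (0 : ℝ) 1) (hb₂ : b₂ ∈ Set.Icc (0 : ℝ) 1)
    (h₁ : a₁ ≤ b₁) (h₂ : a₂ ≤ b₂) :
    0 ≤ nelsenCopula b₁ b₂ - nelsenCopula a₁ b₂ - nelsenCopula b₁ a₂ + nelsenCopula a₁ a₂ := by
  rw [nelsenCopula_eq_add hb₁ hb₂, nelsenCopula_eq_add ha₁ hb₂, nelsenCopula_eq_add hb₁ ha₂,
    nelsenCopula_eq_add ha₁ ha₂]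
  have h₁₂ := min_sub_min_sub_min_add_min_nonneg h₁ (monotone_max_sub_zero (2/3) h₂)
  have h₂₁ := min_sub_min_sub_min_add_min_nonneg (monotone_max_sub_zero (1/3) h₁) h₂
  linarith

lemma is2Copula_nelsenCopula : Is2Copula nelsenCopula :=
  ⟨fun _ hu => nelsenCopula_boundary hu,
    fun _ _ _ _ ha₁ hb₁ ha₂ hb₂ h₁ h₂ => nelsenCopula_two_increasing ha₁ hb₁ ha₂ hb₂ h₁ h₂⟩

lemma abs_nelsenCopula_sub_swap :
    |nelsenCopula (1/3) (2/3) - nelsenCopula (2/3) (1/3)| = 1/3 := by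
  norm_num [nelsenCopula]

/-- Nelsen's extremal 2-copula
`C(u₁,u₂) = min{u₁, u₂, (u₁ − 1/3)⁺ + (u₂ − 2/3)⁺}` attains the bound `1/3` at
`(1/3, 2/3)`: it is a 2-copula and `|C(1/3, 2/3) − C(2/3, 1/3)| = 1/3`. -/
theorem nelsen_extremal :
    Is2Copula (fun u₁ u₂ => min u₁ (min u₂ (max (u₁ - 1/3) 0 + max (u₂ - 2/3) 0))) ∧
    |(fun u₁ u₂ : ℝ => min u₁ (min u₂ (max (u₁ - 1/3) 0 + max (u₂ - 2/3) 0)))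
        (1/3) (2/3) -
      (fun u₁ u₂ : ℝ => min u₁ (min u₂ (max (u₁ - 1/3) 0 + max (u₂ - 2/3) 0)))
        (2/3) (1/3)| = 1/3 :=
  ⟨is2Copula_nelsenCopula, abs_nelsenCopula_sub_swap⟩
end
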